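/- Exactness of the 19-point compact scheme for harmonic polynomials of low degree: if p : ℝ³ → ℝ is a polynomial of total degree at most 5 with Δp = 0, then the 19-point compact difference operator with equal mesh size h applied to p at any grid point yields exactly zero: -24 p(x) + 2∑_{face neighbors} p + ∑_{edge neighbors} p = 0, where sums are over the 6 points x ± h e_i and the 12 points x ± h e_i ± h e_j (i ≠ j). -/
import Mathlib
open MvPolynomial Finset

noncomputable def sten (x : Fin 3 → ℝ) (h : ℝ) (p : MvPolynomial (Fin 3) ℝ) : ℝ :=
  -24 * MvPolynomial.eval x p
    + 2 * ∑ i : Fin 3,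
        (MvPolynomial.eval (x + h • (Pi.single i 1 : Fin 3 → ℝ)) p
          + MvPolynomial.eval (x - h • (Pi.single i 1 : Fin 3 → ℝ)) p)
    + (1 / 2) * ∑ i : Fin 3, ∑ j ∈ Finset.univ \ {i},
        ∑ sg ∈ ({-1, 1} : Finset ℝ), ∑ tg ∈ ({-1, 1} : Finset ℝ),
          MvPolynomial.eval
            (x + (sg * h) • (Pi.single i 1 : Fin 3 → ℝ)
               + (tg * h) • (Pi.single j 1 : Fin 3 → ℝ)) p

noncomputable def lap (p : MvPolynomial (Fin 3) ℝ) : MvPolynomial (Fin 3) ℝ :=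
  ∑ i : Fin 3, MvPolynomial.pderiv i (MvPolynomial.pderiv i p)

lemma eval_mono (y : Fin 3 → ℝ) (d : Fin 3 →₀ ℕ) (r : ℝ) :
    MvPolynomial.eval y (MvPolynomial.monomial d r)
      = r * (y 0 ^ d 0 * (y 1 ^ d 1 * y 2 ^ d 2)) := by
  rw [eval_monomial, Finsupp.prod_pow, Fin.prod_univ_three, mul_assoc]

lemma lap_mono (d : Fin 3 →₀ ℕ) (r : ℝ) :
    lap (MvPolynomial.monomial d r)
      = ∑ i : Fin 3, MvPolynomial.monomial (d - Finsupp.single i 2)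
          (r * (d i * (d i - 1) : ℕ)) := by
  unfold lap
  refine Finset.sum_congr rfl fun i _ => ?_
  rw [pderiv_monomial, pderiv_monomial, tsub_tsub, ← Finsupp.single_add]
  norm_num
  ring_nf

lemma lap_sum {ι : Type*} (s : Finset ι) (f : ι → MvPolynomial (Fin 3) ℝ) :
    lap (∑ j ∈ s, f j) = ∑ j ∈ s, lap (f j) := by
  simp only [lap, map_sum]
  exact Finset.sum_comm

set_option maxHeartbeats 4000000 in
lemma mono_key (x : Fin 3 → ℝ) (h : ℝ) (d : Fin 3 →₀ ℕ) (r : ℝ)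
    (hd : d 0 + d 1 + d 2 ≤ 5) :
    sten x h (MvPolynomial.monomial d r)
      = 6*h^2 * MvPolynomial.eval x (lap (MvPolynomial.monomial d r))
        + h^4/2 * MvPolynomial.eval x (lap (lap (MvPolynomial.monomial d r))) := by
  rw [lap_mono, lap_sum]
  simp only [lap_mono, map_sum]
  unfold sten
  simp only [Finset.sum_sdiff_eq_sub (Finset.subset_univ _), Finset.sum_singleton,
    Fin.sum_univ_three, Finset.sum_pair (by norm_num : (-1:ℝ) ≠ 1)]
  simp only [eval_mono]
  norm_num [Pi.single_apply]
  simp only [show ((2:Fin 3)=1)=False from by simp, show ((2:Fin 3)=0)=False from by simp,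
    show ((1:Fin 3)=0)=False from by simp, show ((1:Fin 3)=2)=False from by simp,
    show ((0:Fin 3)=1)=False from by simp, show ((0:Fin 3)=2)=False from by simp,
    if_false, add_zero, if_true]
  simp only [Finsupp.tsub_apply, Finsupp.single_apply,
    show ((2:Fin 3)=1)=False from by simp, show ((2:Fin 3)=0)=False from by simp,
    show ((1:Fin 3)=0)=False from by simp, show ((1:Fin 3)=2)=False from by simp,
    show ((0:Fin 3)=1)=False from by simp, show ((0:Fin 3)=2)=False from by simp,
    if_false, if_true, Nat.sub_zero]
  set a := d 0 with hA
  set b := d 1 with hB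
  set c := d 2 with hC
  clear_value a b c
  clear hA hB hC
  have ha : a ≤ 5 := by omega
  have hb : b ≤ 5 := by omega
  have hc : c ≤ 5 := by omega
  interval_cases a <;> interval_cases b <;> interval_cases c <;>
    first
      | (exfalso; omega)
      | (norm_num; ring)

lemma sten_add (x : Fin 3 → ℝ) (h : ℝ) (p q : MvPolynomial (Fin 3) ℝ) :
    sten x h (p + q) = sten x h p + sten x h q := by
  unfold sten
  simp only [map_add, Finset.sum_add_distrib]
  ring

lemma sten_zero (x : Fin 3 → ℝ) (h : ℝ) : sten x h 0 = 0 := by simp [sten]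

lemma sten_sum (x : Fin 3 → ℝ) (h : ℝ) {ι : Type*} (s : Finset ι)
    (f : ι → MvPolynomial (Fin 3) ℝ) :
    sten x h (∑ i ∈ s, f i) = ∑ i ∈ s, sten x h (f i) := by
  classical
  induction s using Finset.cons_induction with
  | empty => simp [sten_zero]
  | cons a s ha ih => rw [Finset.sum_cons, Finset.sum_cons, sten_add, ih]

theorem stmt_17 (p : MvPolynomial (Fin 3) ℝ) (hdeg : p.totalDegree ≤ 5)
    (hharm : ∑ i : Fin 3, MvPolynomial.pderiv i (MvPolynomial.pderiv i p) = 0)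
    (x : Fin 3 → ℝ) (h : ℝ) (hh : 0 < h) :
    -24 * MvPolynomial.eval x p
      + 2 * ∑ i : Fin 3,
          (MvPolynomial.eval (x + h • (Pi.single i 1 : Fin 3 → ℝ)) p
            + MvPolynomial.eval (x - h • (Pi.single i 1 : Fin 3 → ℝ)) p)
      + (1 / 2) * ∑ i : Fin 3, ∑ j ∈ Finset.univ \ {i},
          ∑ sg ∈ ({-1, 1} : Finset ℝ), ∑ tg ∈ ({-1, 1} : Finset ℝ),
            MvPolynomial.eval
              (x + (sg * h) • (Pi.single i 1 : Fin 3 → ℝ)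
                 + (tg * h) • (Pi.single j 1 : Fin 3 → ℝ)) p
      = 0 := by
  have hlap : lap p = 0 := hharm
  have key : sten x h p
      = 6*h^2 * MvPolynomial.eval x (lap p)
        + h^4/2 * MvPolynomial.eval x (lap (lap p)) := by
    conv_lhs => rw [← MvPolynomial.support_sum_monomial_coeff p]
    conv_rhs => rw [← MvPolynomial.support_sum_monomial_coeff p]
    rw [sten_sum, lap_sum, map_sum, lap_sum, map_sum, Finset.mul_sum, Finset.mul_sum,
      ← Finset.sum_add_distrib]
    refine Finset.sum_congr rfl fun d hd => ?_
    refine mono_key x h d _ ?_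
    have h1 : d.sum (fun _ e => e) ≤ 5 := le_trans (MvPolynomial.le_totalDegree hd) hdeg
    rwa [Finsupp.sum_fintype _ _ (fun _ => rfl), Fin.sum_univ_three] at h1
  have : sten x h p = 0 := by
    rw [key, hlap]
    simp [lap]
  exact this
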